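/- In the braid group B_n, the band generators satisfy a_{ts} a_{sr} = a_{sr} a_{tr} for all n ≥ t > s > r ≥ 1. -/

import Mathlib

/-!
Write `B = a_{t-1} ⋯ a_{s+1}` and `X = a_{sr}`. Then `a_{ts} = B a_s B⁻¹` and
`a_{tr} = B (a_s X a_s⁻¹) B⁻¹`. The word `B` only involves generators far from those of `X`,
so `B` commutes with `X`, and an induction on `s` using the braid relations shows
`a_s X a_s = X a_s X`, i.e. `a_s X = X (a_s X a_s⁻¹)`. Conjugating this identity by `B` gives
the theorem.
-/

/-- `descProd a s k` is the product `a (s+k) * a (s+k-1) * ... * a (s+1)`. -/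
def descProd {G : Type*} [Group G] (a : ℕ → G) (s : ℕ) : ℕ → G
  | 0 => 1
  | k + 1 => a (s + k + 1) * descProd a s k

/-- The Birman-Ko-Lee band generator
`a_{ts} = (a_{t-1} a_{t-2} ⋯ a_{s+1}) a_s (a_{s+1}⁻¹ ⋯ a_{t-2}⁻¹ a_{t-1}⁻¹)`. -/
def band {G : Type*} [Group G] (a : ℕ → G) (t s : ℕ) : G :=
  descProd a s (t - s - 1) * a s * (descProd a s (t - s - 1))⁻¹

section Group

variable {G : Type*} [Group G]

theorem mul_mul_inv_eq_inv_mul_mul_of_braid {x y : G} (h : x * y * x = y * x * y) :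
    x * y * x⁻¹ = y⁻¹ * x * y := by
  calc x * y * x⁻¹ = y⁻¹ * (y * x * y) * x⁻¹ := by group
    _ = y⁻¹ * (x * y * x) * x⁻¹ := by rw [h]
    _ = y⁻¹ * x * y := by group

theorem mul_eq_mul_conj_of_braid {x y : G} (h : x * y * x = y * x * y) :
    x * y = y * (x * y * x⁻¹) := by
  rw [mul_mul_inv_eq_inv_mul_mul_of_braid h]
  group

theorem braid_conj_of_braid_of_commute {u v w : G} (huv : u * v * u = v * u * v)
    (hvw : v * w * v = w * v * w) (huw : Commute u w) :
    u * (v * w * v⁻¹) * u = v * w * v⁻¹ * u * (v * w * v⁻¹) := by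
  -- `v w v⁻¹ = w⁻¹ v w`, and conjugation by `w⁻¹` fixes `u`.
  have hu : MulAut.conj w⁻¹ u = u := huw.inv_right.symm.mul_inv_cancel
  have hv : v * w * v⁻¹ = MulAut.conj w⁻¹ v := by
    rw [MulAut.conj_apply, inv_inv, mul_mul_inv_eq_inv_mul_mul_of_braid hvw]
  rw [hv]
  simpa only [map_mul, hu] using congrArg (MulAut.conj w⁻¹) huv

end Group

section Band

variable {G : Type*} [Group G] (a : ℕ → G)

theorem descProd_add (s m k : ℕ) :
    descProd a s (m + k) = descProd a (s + m) k * descProd a s m := by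
  induction k with
  | zero => simp [descProd]
  | succ k ih => rw [← add_assoc, descProd, descProd, ih, ← add_assoc, mul_assoc]

variable {a}

theorem Commute.descProd_left {g : G} {s k : ℕ}
    (h : ∀ j, s < j → j ≤ s + k → Commute (a j) g) : Commute (descProd a s k) g := by
  induction k with
  | zero => exact Commute.one_left g
  | succ k ih =>
    exact (h _ (by omega) le_rfl).mul_left (ih fun j hj hjk => h j hj (by omega))

theorem Commute.band_left {g : G} {s r : ℕ} (hrs : r < s)
    (h : ∀ j, r ≤ j → j < s → Commute (a j) g) : Commute (band a s r) g := by
  have hD : Commute (descProd a r (s - r - 1)) g :=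
    Commute.descProd_left fun j hj hjs => h j hj.le (by omega)
  exact (hD.mul_left (h r le_rfl hrs)).mul_left hD.inv_left

@[simp]
theorem band_succ_self (s : ℕ) : band a (s + 1) s = a s := by
  simp [band, descProd]

theorem band_succ {s r : ℕ} (hrs : r < s) :
    band a (s + 1) r = a s * band a s r * (a s)⁻¹ := by
  have hk : s + 1 - r - 1 = s - r - 1 + 1 := by omega
  have hs : r + (s - r - 1) + 1 = s := by omega
  simp only [band, hk, descProd, hs, mul_inv_rev, mul_assoc]

theorem band_eq_conj_band_succ {t s r : ℕ} (hrs : r ≤ s) (hst : s < t) :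
    band a t r =
      descProd a s (t - s - 1) * band a (s + 1) r * (descProd a s (t - s - 1))⁻¹ := by
  have hk : t - r - 1 = (s - r) + (t - s - 1) := by omega
  have hs : r + (s - r) = s := by omega
  have hm : s + 1 - r - 1 = s - r := by omega
  simp only [band, hk, descProd_add, hs, hm, mul_inv_rev, mul_assoc]

theorem band_braid {n : ℕ}
    (hbraid : ∀ i, 1 ≤ i → i + 1 ≤ n - 1 →
      a i * a (i + 1) * a i = a (i + 1) * a i * a (i + 1))
    (hcomm : ∀ i j, 1 ≤ i → i + 2 ≤ j → j ≤ n - 1 → a i * a j = a j * a i)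
    {s r : ℕ} (hr : 1 ≤ r) (hrs : r < s) (hs : s ≤ n - 1) :
    a s * band a s r * a s = band a s r * a s * band a s r := by
  induction s, hrs using Nat.le_induction with
  | base => simpa using (hbraid r hr hs).symm
  | succ s hrs ih =>
    have hfar : Commute (a (s + 1)) (band a s r) :=
      (Commute.band_left hrs fun j hj hjs => hcomm j (s + 1) (by omega) (by omega) hs).symm
    rw [band_succ hrs]
    exact braid_conj_of_braid_of_commute (hbraid s (by omega) hs).symm (ih (by omega)) hfar

end Band

theorem band_mul_band_eq_band_mul_band' {G : Type*} [Group G] (n : ℕ) (a : ℕ → G)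
    (hbraid : ∀ i, 1 ≤ i → i + 1 ≤ n - 1 →
      a i * a (i + 1) * a i = a (i + 1) * a i * a (i + 1))
    (hcomm : ∀ i j, 1 ≤ i → i + 2 ≤ j → j ≤ n - 1 → a i * a j = a j * a i) :
    ∀ t s r, t ≤ n → s < t → r < s → 1 ≤ r →
      band a t s * band a s r = band a s r * band a t r := by
  intro t s r htn hst hrs hr
  set B := descProd a s (t - s - 1)
  set X := band a s r
  have hBX : Commute B X :=
    Commute.descProd_left fun j hsj hjt =>
      (Commute.band_left hrs fun i hri his => hcomm i j (by omega) (by omega) (by omega)).symm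
  have hX : MulAut.conj B X = X := hBX.mul_inv_cancel
  have hts : band a t s = MulAut.conj B (a s) := rfl
  have htr : band a t r = MulAut.conj B (a s * X * (a s)⁻¹) := by
    rw [MulAut.conj_apply, band_eq_conj_band_succ hrs.le hst, band_succ hrs]
  have hbr : a s * X * a s = X * a s * X := band_braid hbraid hcomm hr hrs (by omega)
  calc band a t s * X = MulAut.conj B (a s) * MulAut.conj B X := by rw [hts, hX]
    _ = MulAut.conj B (X * (a s * X * (a s)⁻¹)) := by
        rw [← map_mul]; exact congrArg _ (mul_eq_mul_conj_of_braid hbr)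
    _ = X * band a t r := by rw [map_mul, hX, htr]
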